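/- For every c > 0, every ū₀ ∈ [0,1] and every u₂ ≥ 0, the function u₁ ↦ −(u₁(1 − μ̄(u₁,u₂)) − u₂ μ̄(u₁,u₂)) − (u₁+1)/(u₂+1) + (c/2)u₁², where μ̄(u₁,u₂) = (u₁ − u₂ + 1 + ū₀)/3, is strictly convex on ℝ (its second derivative equals 2/3 + c > 0), and its unique minimizer over [0,∞) is u₁* = (2u₂ − ū₀u₂ − ū₀ + 5)/(3cu₂ + 3c + 2u₂ + 2), which is strictly positive. -/

import Mathlib

/-!
Expanding `μ̄`, the cost `K1 c ū₀ u₂` is a quadratic polynomial in `u₁` with leading coefficient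
`c/2 + 1/3 > 0`, so everything follows from the elementary theory of such a quadratic: its second
derivative is twice the leading coefficient, and it exceeds its value at the vertex `-b/(2a)` by
`a (x + b/(2a))²`.
-/

/-- Anticipated cost of major player 1 in the Multi-Leader-Follower setting,
where the consumers' mean field response is `μ̄(u₁,u₂) = (u₁ - u₂ + 1 + ū₀)/3`. -/
noncomputable def K1 (c ubar₀ u₂ u₁ : ℝ) : ℝ :=
  -(u₁ * (1 - (u₁ - u₂ + 1 + ubar₀) / 3) - u₂ * ((u₁ - u₂ + 1 + ubar₀) / 3)) -
    (u₁ + 1) / (u₂ + 1) + c / 2 * u₁ ^ 2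

open Set

section Quadratic

variable (a b c : ℝ)

theorem deriv_quadratic : deriv (fun x => a * x ^ 2 + b * x + c) = fun x => 2 * a * x + b := by
  funext x
  have h : HasDerivAt (fun x => a * x ^ 2 + b * x + c) (a * (2 * x ^ (2 - 1)) + b * 1) x :=
    (((hasDerivAt_pow 2 x).const_mul a).add ((hasDerivAt_id x).const_mul b)).add_const c
  rw [h.deriv]
  ring

theorem deriv_deriv_quadratic (x : ℝ) :
    deriv (deriv fun x => a * x ^ 2 + b * x + c) x = 2 * a := by
  rw [deriv_quadratic]
  simp

theorem strictConvexOn_quadratic (ha : 0 < a) :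
    StrictConvexOn ℝ univ fun x => a * x ^ 2 + b * x + c :=
  strictConvexOn_of_deriv2_pos' convex_univ (by fun_prop) fun x _ => by
    show 0 < deriv (deriv _) x
    rw [deriv_deriv_quadratic]
    positivity

variable {a} in
theorem quadratic_vertex_lt (ha : 0 < a) {x : ℝ} (hx : x ≠ -b / (2 * a)) :
    a * (-b / (2 * a)) ^ 2 + b * (-b / (2 * a)) + c < a * x ^ 2 + b * x + c := by
  have hsq : 0 < (x - -b / (2 * a)) ^ 2 := sq_pos_of_ne_zero (sub_ne_zero.mpr hx)
  have hgap : a * x ^ 2 + b * x + c - (a * (-b / (2 * a)) ^ 2 + b * (-b / (2 * a)) + c)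
      = a * (x - -b / (2 * a)) ^ 2 := by
    field_simp
    ring
  linarith [mul_pos ha hsq]

end Quadratic

theorem K1_eq_quadratic (c ubar₀ u₂ : ℝ) :
    K1 c ubar₀ u₂ = fun x => (c / 2 + 1 / 3) * x ^ 2 + ((ubar₀ - 2) / 3 - 1 / (u₂ + 1)) * x
      + ((ubar₀ + 1 - u₂) * u₂ / 3 - 1 / (u₂ + 1)) := by
  funext x
  simp only [K1, add_div]
  ring

theorem K1_vertex_eq {c ubar₀ u₂ : ℝ} (hc : 0 < c) (hu₂ : 0 ≤ u₂) :
    -((ubar₀ - 2) / 3 - 1 / (u₂ + 1)) / (2 * (c / 2 + 1 / 3))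
      = (2 * u₂ - ubar₀ * u₂ - ubar₀ + 5) / (3 * c * u₂ + 3 * c + 2 * u₂ + 2) := by
  have : u₂ + 1 ≠ 0 := by positivity
  have : 3 * c * u₂ + 3 * c + 2 * u₂ + 2 ≠ 0 := by positivity
  field_simp
  ring

theorem stmt_14 (c ubar₀ u₂ : ℝ) (hc : 0 < c) (h₀ : ubar₀ ∈ Set.Icc (0 : ℝ) 1)
    (hu₂ : 0 ≤ u₂) :
    StrictConvexOn ℝ Set.univ (K1 c ubar₀ u₂) ∧
    (∀ x : ℝ, deriv (deriv (K1 c ubar₀ u₂)) x = 2 / 3 + c) ∧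
    0 < (2 * u₂ - ubar₀ * u₂ - ubar₀ + 5) / (3 * c * u₂ + 3 * c + 2 * u₂ + 2) ∧
    ∀ u₁ : ℝ, 0 ≤ u₁ →
      u₁ ≠ (2 * u₂ - ubar₀ * u₂ - ubar₀ + 5) / (3 * c * u₂ + 3 * c + 2 * u₂ + 2) →
      K1 c ubar₀ u₂ ((2 * u₂ - ubar₀ * u₂ - ubar₀ + 5) / (3 * c * u₂ + 3 * c + 2 * u₂ + 2))
        < K1 c ubar₀ u₂ u₁ := by
  have hlead : 0 < c / 2 + 1 / 3 := by positivity
  rw [K1_eq_quadratic]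
  refine ⟨strictConvexOn_quadratic _ _ _ hlead, fun x => ?_,
    div_pos (by nlinarith [h₀.2]) (by positivity), fun u₁ _ hne => ?_⟩
  · rw [deriv_deriv_quadratic]
    ring
  · rw [← K1_vertex_eq hc hu₂] at hne ⊢
    exact quadratic_vertex_lt _ _ hlead hne
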